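/- arXiv:math/0107063 — 2 statements merged into one kernel-verified Lean document; each statement's English description precedes it below -/
import Mathlib

section
/- If R ⊆ φ⁻¹(b) is a set containing exactly one element from each W-orbit in A that meets φ⁻¹(b), then ∑_{x ∈ R} t(x) = 1/|Stab_W(b)|. -/
open Finset

/-- `(g, y) ↦ g • y` is a bijection `G × R ≃ F`. -/
theorem Finset.sum_eq_card_nsmul_sum_of_orbit_reps {G α M : Type*} [Group G] [Finite G]
    [MulAction G α] [AddCommMonoid M] {F R : Finset α}
    (hRF : ∀ g : G, ∀ y ∈ R, g • y ∈ F)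
    (hcover : ∀ x ∈ F, ∃ g : G, ∃ y ∈ R, g • y = x)
    (hsep : ∀ x ∈ R, ∀ y ∈ R, ∀ g : G, g • x = y → x = y)
    (hfree : ∀ y ∈ R, ∀ g : G, g • y = y → g = 1)
    {f : α → M} (hf : ∀ (g : G) (x : α), f (g • x) = f x) :
    ∑ x ∈ F, f x = Nat.card G • ∑ y ∈ R, f y := by
  have := Fintype.ofFinite G
  have hbij : ∑ p ∈ (univ : Finset G) ×ˢ R, f (p.1 • p.2) = ∑ x ∈ F, f x := by
    refine sum_bij (fun p _ => p.1 • p.2) (fun p hp => hRF _ _ (mem_product.1 hp).2) ?_ ?_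
      (fun _ _ => rfl)
    · rintro ⟨g₁, y₁⟩ h₁ ⟨g₂, y₂⟩ h₂ (heq : g₁ • y₁ = g₂ • y₂)
      have hy₁ : y₁ ∈ R := (mem_product.1 h₁).2
      have hy₂ : y₂ ∈ R := (mem_product.1 h₂).2
      have hmove : (g₂⁻¹ * g₁) • y₁ = y₂ := by rw [mul_smul, heq, inv_smul_smul]
      have hy : y₁ = y₂ := hsep y₁ hy₁ y₂ hy₂ _ hmove
      subst hy
      have hg : g₂⁻¹ * g₁ = 1 := hfree y₁ hy₁ _ hmove
      rw [inv_mul_eq_one] at hg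
      rw [hg]
    · intro x hx
      obtain ⟨g, y, hy, rfl⟩ := hcover x hx
      exact ⟨(g, y), mem_product.2 ⟨mem_univ g, hy⟩, rfl⟩
  simp only [← hbij, sum_product, hf, sum_const, card_univ, Nat.card_eq_fintype_card]

theorem stmt_3_general {W A B : Type*} [Group W] [Fintype W] [Fintype A]
    [DecidableEq B] [MulAction W A] [MulAction W B]
    (φ : A → B) (hφ : ∀ (w : W) (a : A), φ (w • a) = w • φ a)
    (t : A → ℝ) (ht : ∀ (w : W) (a : A), t (w • a) = t a)
    (b : B)
    (hsum : ∑ x ∈ Finset.univ.filter (fun x => φ x = b), t x = 1)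
    (hfree : ∀ x : A, φ x = b → ∀ w : W, w • b = b → w • x = x → w = 1)
    (R : Finset A) (hRsub : ∀ x ∈ R, φ x = b)
    (hRrep : ∀ x : A, φ x = b → ∃! y, y ∈ R ∧ ∃ w : W, w • x = y) :
    ∑ x ∈ R, t x = 1 / (Nat.card (MulAction.stabilizer W b) : ℝ) := by
  set S := MulAction.stabilizer W b
  have hfiber : ∑ x ∈ univ.filter (fun x => φ x = b), t x = Nat.card S • ∑ x ∈ R, t x := by
    refine sum_eq_card_nsmul_sum_of_orbit_reps (G := S) ?_ ?_ ?_ ?_ (fun s x => ht s x)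
    · intro s y hy
      rw [mem_filter, Subgroup.smul_def, hφ, hRsub y hy]
      exact ⟨mem_univ _, s.2⟩
    · intro x hx
      have hx : φ x = b := (mem_filter.1 hx).2
      obtain ⟨y, ⟨hy, w, rfl⟩, -⟩ := hRrep x hx
      have hw : w ∈ S := by rw [MulAction.mem_stabilizer_iff, ← hx, ← hφ, hRsub _ hy, hx]
      exact ⟨⟨w, hw⟩⁻¹, w • x, hy, inv_smul_smul (⟨w, hw⟩ : S) x⟩
    · intro x hx y hy s hs
      exact (hRrep x (hRsub x hx)).unique ⟨hx, 1, one_smul W x⟩ ⟨hy, s, hs⟩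
    · intro y hy s hs
      exact Subtype.ext (hfree y (hRsub y hy) s s.2 hs)
  have hcard : (Nat.card S : ℝ) ≠ 0 := Nat.cast_ne_zero.2 Nat.card_pos.ne'
  rw [hsum, nsmul_eq_mul] at hfiber
  rw [eq_div_iff hcard, mul_comm, ← hfiber]

/-- If `R` contains exactly one element from each `W`-orbit in `A` meeting the
fiber `φ⁻¹(b)`, then `∑_{x ∈ R} t(x) = 1 / |Stab_W(b)|`. -/
theorem stmt_3 {W A B : Type*} [Group W] [Fintype W] [Fintype A] [Fintype B]
    [DecidableEq B] [MulAction W A] [MulAction W B]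
    (φ : A → B) (hφ : ∀ (w : W) (a : A), φ (w • a) = w • φ a)
    (t : A → ℝ) (ht : ∀ (w : W) (a : A), t (w • a) = t a)
    (b : B)
    (hsum : ∑ x ∈ Finset.univ.filter (fun x => φ x = b), t x = 1)
    (hfree : ∀ x : A, φ x = b → ∀ w : W, w • b = b → w • x = x → w = 1)
    (R : Finset A) (hRsub : ∀ x ∈ R, φ x = b)
    (hRrep : ∀ x : A, φ x = b → ∃! y, y ∈ R ∧ ∃ w : W, w • x = y) :
    ∑ x ∈ R, t x = 1 / (Nat.card (MulAction.stabilizer W b) : ℝ) :=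
  stmt_3_general φ hφ t ht b hsum hfree R hRsub hRrep
end

section
/- There exists a holomorphic function h: Ω → ℂ such that g(z) = ℓ(z)·h(z) for all z ∈ Ω; i.e., a holomorphic function on a convex open set vanishing on the trace of an affine hyperplane is divisible by the defining affine functional. -/
/-!
Fix `v` with `L v = 1`. Away from the hyperplane `L = c` the quotient is `g / (L - c)`. Near a
point of the hyperplane, restrict `g` to the lines in direction `v`, parametrized by the value of
`L - c`: the quotient becomes the difference quotient at `0` of a holomorphic function of one
variable, which Cauchy's formula writes as a circle integral. Its integrand is jointly holomorphic
in the point and the integration variable, and Cauchy estimates bound its derivative uniformly, so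
the integral may be differentiated under the integral sign.
-/

open Metric Set Filter Topology

theorem norm_fderiv_le_of_norm_le_on_ball {E F : Type*} [NormedAddCommGroup E] [NormedSpace ℂ E]
    [NormedAddCommGroup F] [NormedSpace ℂ F] {f : E → F} {x : E} {r M : ℝ} (hr : 0 < r)
    (hf : DifferentiableOn ℂ f (ball x r)) (hM : ∀ y ∈ ball x r, ‖f y‖ ≤ M) :
    ‖fderiv ℂ f x‖ ≤ 2 * M / r := by
  refine Complex.norm_fderiv_le_div_of_mapsTo_ball hf (fun y hy => ?_) hr
  rw [mem_closedBall, dist_eq_norm]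
  linarith [norm_sub_le (f y) (f x), hM y hy, hM x (mem_ball_self hr)]

theorem IsCompact.exists_thickening_forall_norm_fderiv_le {X F : Type*} [NormedAddCommGroup X]
    [NormedSpace ℂ X] [ProperSpace X] [NormedAddCommGroup F] [NormedSpace ℂ F] {K U : Set X}
    {f : X → F} (hK : IsCompact K) (hU : IsOpen U) (hKU : K ⊆ U) (hf : DifferentiableOn ℂ f U) :
    ∃ δ > 0, ∃ C, thickening δ K ⊆ U ∧ ∀ y ∈ thickening δ K, ‖fderiv ℂ f y‖ ≤ C := by
  obtain ⟨δ, hδ, hδU⟩ := hK.exists_cthickening_subset_open hU hKU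
  obtain ⟨M, hM⟩ := hK.cthickening.exists_bound_of_continuousOn (hf.continuousOn.mono hδU)
  have hball : ∀ y ∈ thickening (δ / 2) K, ball y (δ / 2) ⊆ cthickening δ K := fun y hy =>
    calc ball y (δ / 2) ⊆ thickening (δ / 2) (thickening (δ / 2) K) := ball_subset_thickening hy _
      _ ⊆ thickening (δ / 2 + δ / 2) K := thickening_thickening_subset _ _ _
      _ ⊆ cthickening δ K := by rw [add_halves]; exact thickening_subset_cthickening δ K
  exact ⟨δ / 2, half_pos hδ, 2 * M / (δ / 2),
    fun y hy => hδU (hball y hy (mem_ball_self (half_pos hδ))),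
    fun y hy => norm_fderiv_le_of_norm_le_on_ball (half_pos hδ) (hf.mono ((hball y hy).trans hδU))
      fun z hz => hM z (hball y hy hz)⟩

theorem differentiableAt_circleIntegral_of_differentiableOn {E : Type*} [NormedAddCommGroup E]
    [NormedSpace ℂ E] [FiniteDimensional ℂ E] {G : E × ℂ → ℂ} {U : Set (E × ℂ)}
    (hU : IsOpen U) (hG : DifferentiableOn ℂ G U) {x₀ : E} {c : ℂ} {R : ℝ}
    (hK : {x₀} ×ˢ sphere c |R| ⊆ U) :
    DifferentiableAt ℂ (fun x => ∮ ζ in C(c, R), G (x, ζ)) x₀ := by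
  borelize (E × ℂ)
  obtain ⟨δ, hδ, C, hδU, hC⟩ := (isCompact_singleton.prod (isCompact_sphere c |R|))
    |>.exists_thickening_forall_norm_fderiv_le hU hK hG
  have hnear : ∀ x ∈ ball x₀ δ, ∀ θ : ℝ,
      (x, circleMap c R θ) ∈ thickening δ ({x₀} ×ˢ sphere c |R|) := fun x hx θ =>
    mem_thickening_iff.2 ⟨(x₀, circleMap c R θ), ⟨rfl, circleMap_mem_sphere' c R θ⟩,
      by simpa [Prod.dist_eq] using hx⟩
  have hderiv : ∀ x ∈ ball x₀ δ, ∀ θ : ℝ, HasFDerivAt (fun x => G (x, circleMap c R θ))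
      ((fderiv ℂ G (x, circleMap c R θ)).comp (ContinuousLinearMap.inl ℂ E ℂ)) x :=
    fun x hx θ => (hG.differentiableAt (hU.mem_nhds (hδU (hnear x hx θ)))).hasFDerivAt.comp x
      (hasFDerivAt_prodMk_left x _)
  have hbound : ∀ x ∈ ball x₀ δ, ∀ θ : ℝ,
      ‖(fderiv ℂ G (x, circleMap c R θ)).comp (ContinuousLinearMap.inl ℂ E ℂ)‖ ≤ C :=
    fun x hx θ => (ContinuousLinearMap.opNorm_comp_le _ _).trans <|
      (mul_le_of_le_one_right (norm_nonneg _) (ContinuousLinearMap.norm_inl_le_one ℂ E ℂ)).trans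
        (hC _ (hnear x hx θ))
  have hcont : ∀ x ∈ ball x₀ δ, Continuous fun θ => G (x, circleMap c R θ) := fun x hx =>
    hG.continuousOn.comp_continuous (by fun_prop) fun θ => hδU (hnear x hx θ)
  have hF'meas : Measurable fun θ =>
      (fderiv ℂ G (x₀, circleMap c R θ)).comp (ContinuousLinearMap.inl ℂ E ℂ) :=
    ((ContinuousLinearMap.compL ℂ E (E × ℂ) ℂ).flip (ContinuousLinearMap.inl ℂ E ℂ)).continuous
      |>.measurable.comp <| (measurable_fderiv ℂ G).comp
        (by fun_prop : Continuous fun θ => (x₀, circleMap c R θ)).measurable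
  have hdc : Continuous fun θ => circleMap 0 R θ * Complex.I := by fun_prop
  simp only [circleIntegral, deriv_circleMap]
  refine (intervalIntegral.hasFDerivAt_integral_of_dominated_of_fderiv_le
    (F' := fun x θ => (circleMap 0 R θ * Complex.I) •
      (fderiv ℂ G (x, circleMap c R θ)).comp (ContinuousLinearMap.inl ℂ E ℂ))
    (bound := fun _ => |R| * C) (ball_mem_nhds x₀ hδ) ?_
    ((hdc.smul (hcont x₀ (mem_ball_self hδ))).intervalIntegrable _ _)
    (hdc.aestronglyMeasurable.smul hF'meas.aestronglyMeasurable) ?_ intervalIntegrable_const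
    ?_).differentiableAt
  · filter_upwards [ball_mem_nhds x₀ hδ] with x hx
    exact (hdc.smul (hcont x hx)).aestronglyMeasurable
  · refine MeasureTheory.ae_of_all _ fun θ _ x hx => ?_
    rw [norm_smul, norm_mul, Complex.norm_I, mul_one, norm_circleMap_zero]
    exact mul_le_mul_of_nonneg_left (hbound x hx θ) (abs_nonneg R)
  · exact MeasureTheory.ae_of_all _ fun θ _ x hx =>
      (hderiv x hx θ).const_smul (circleMap 0 R θ * Complex.I)

theorem dslope_eq_circleIntegral {E : Type*} [NormedAddCommGroup E] [NormedSpace ℂ E]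
    [CompleteSpace E] {φ : ℂ → E} {c w : ℂ} {R R' : ℝ} (hR : 0 < R) (hRR' : R < R')
    (hφ : DifferentiableOn ℂ φ (ball c R')) (hw : w ∈ ball c R) :
    dslope φ c w =
      (2 * Real.pi * Complex.I)⁻¹ • ∮ ζ in C(c, R), ((ζ - c) * (ζ - w))⁻¹ • (φ ζ - φ c) := by
  have hdslope : DiffContOnCl ℂ (dslope φ c) (ball c R) := by
    refine DifferentiableOn.diffContOnCl ?_
    rw [closure_ball c hR.ne']
    exact ((Complex.differentiableOn_dslope (ball_mem_nhds c (hR.trans hRR'))).2 hφ).mono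
      (closedBall_subset_ball hRR')
  rw [← hdslope.two_pi_i_inv_smul_circleIntegral_sub_inv_smul hw]
  congr 1
  refine circleIntegral.integral_congr hR.le fun ζ hζ => ?_
  have hζc : ζ ≠ c := ne_of_mem_sphere hζ hR.ne'
  simp only [dslope_of_ne _ hζc, slope, vsub_eq_sub, mul_inv, mul_smul]
  rw [smul_comm]

section Hyperplane

variable {E : Type*} [NormedAddCommGroup E] [NormedSpace ℂ E] (L : E →L[ℂ] ℂ) (c : ℂ) (v : E)

-- The point of the line through `z` in direction `v` at which `L - c` equals `t`, if `L v = 1`.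
noncomputable def lineParam (z : E) (t : ℂ) : E := z + (t - (L z - c)) • v

variable {L c v}

theorem lineParam_apply_sub (hv : L v = 1) (z : E) (t : ℂ) : L (lineParam L c v z t) - c = t := by
  simp only [lineParam, map_add, map_smul, hv, smul_eq_mul, mul_one]
  ring

theorem lineParam_self (z : E) : lineParam L c v z (L z - c) = z := by
  simp [lineParam]

theorem lineParam_of_eq {z : E} (hz : L z = c) (t : ℂ) : lineParam L c v z t = z + t • v := by
  simp [lineParam, hz]

theorem differentiable_lineParam :
    Differentiable ℂ fun q : E × ℂ => lineParam L c v q.1 q.2 := by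
  unfold lineParam
  fun_prop

variable (L c v) in
noncomputable def hyperplaneQuotient (g : E → ℂ) (z : E) : ℂ :=
  if L z = c then deriv (fun t => g (lineParam L c v z t)) 0 else g z / (L z - c)

variable {g : E → ℂ} {Ω : Set E}

theorem eq_mul_hyperplaneQuotient (hvan : ∀ z ∈ Ω, L z = c → g z = 0) {z : E} (hz : z ∈ Ω) :
    g z = (L z - c) * hyperplaneQuotient L c v g z := by
  by_cases hzc : L z = c
  · simp [hvan z hz hzc, hzc]
  · have hne : L z - c ≠ 0 := sub_ne_zero.2 hzc
    simp only [hyperplaneQuotient, if_neg hzc]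
    field_simp

theorem hyperplaneQuotient_eq_dslope {z : E} (hz : g (lineParam L c v z 0) = 0) :
    hyperplaneQuotient L c v g z = dslope (fun t => g (lineParam L c v z t)) 0 (L z - c) := by
  by_cases hzc : L z = c
  · rw [hyperplaneQuotient, if_pos hzc, sub_eq_zero.2 hzc, dslope_same]
  · rw [hyperplaneQuotient, if_neg hzc, dslope_of_ne _ (sub_ne_zero.2 hzc), slope_def_field,
      hz, lineParam_self, sub_zero, sub_zero]

theorem differentiableAt_hyperplaneQuotient_of_ne (hΩ : IsOpen Ω) (hg : DifferentiableOn ℂ g Ω)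
    {z₀ : E} (hz₀ : z₀ ∈ Ω) (hz₀c : L z₀ ≠ c) :
    DifferentiableAt ℂ (hyperplaneQuotient L c v g) z₀ := by
  refine ((hg.differentiableAt (hΩ.mem_nhds hz₀)).mul
    ((L.differentiableAt.sub_const c).inv (sub_ne_zero.2 hz₀c))).congr_of_eventuallyEq ?_
  filter_upwards [L.continuous.continuousAt.eventually_ne hz₀c] with z hz
  simp [hyperplaneQuotient, hz, div_eq_mul_inv]

variable (L c v) in
noncomputable def hyperplaneIntegrand (g : E → ℂ) (q : E × ℂ) : ℂ :=
  (q.2 * (q.2 - (L q.1 - c)))⁻¹ • (g (lineParam L c v q.1 q.2) - g (lineParam L c v q.1 0))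

theorem hyperplaneQuotient_eventuallyEq_circleIntegral (hv : L v = 1) (hΩ : IsOpen Ω)
    (hg : DifferentiableOn ℂ g Ω) (hvan : ∀ z ∈ Ω, L z = c → g z = 0) {z₀ : E}
    (hz₀c : L z₀ = c) {r : ℝ} (hr : 0 < r) (hrΩ : ∀ t ∈ closedBall (0 : ℂ) r, z₀ + t • v ∈ Ω) :
    hyperplaneQuotient L c v g =ᶠ[𝓝 z₀] fun z =>
      (2 * Real.pi * Complex.I)⁻¹ • ∮ ζ in C(0, r / 2), hyperplaneIntegrand L c v g (z, ζ) := by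
  have hline : ∀ᶠ z in 𝓝 z₀, ∀ t ∈ closedBall (0 : ℂ) r, lineParam L c v z t ∈ Ω :=
    (isCompact_closedBall 0 r).eventually_forall_of_forall_eventually fun t ht =>
      differentiable_lineParam.continuous.continuousAt.preimage_mem_nhds
        (hΩ.mem_nhds (by simpa [lineParam_of_eq hz₀c] using hrΩ t ht))
  have hsmall : ∀ᶠ z in 𝓝 z₀, L z - c ∈ ball (0 : ℂ) (r / 2) :=
    (L.continuous.sub continuous_const).continuousAt.preimage_mem_nhds
      (by simpa [hz₀c] using ball_mem_nhds (0 : ℂ) (half_pos hr))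
  filter_upwards [hline, hsmall] with z hz hzr
  have hz0 : L (lineParam L c v z 0) = c := sub_eq_zero.1 (lineParam_apply_sub hv z 0)
  rw [hyperplaneQuotient_eq_dslope (hvan _ (hz 0 (mem_closedBall_self hr.le)) hz0)]
  refine (dslope_eq_circleIntegral (half_pos hr) (half_lt_self hr) (fun t ht => ?_) hzr).trans ?_
  · exact ((hg.differentiableAt (hΩ.mem_nhds (hz t (ball_subset_closedBall ht)))).comp t
      ((by unfold lineParam; fun_prop : Differentiable ℂ (lineParam L c v z)) t))
      |>.differentiableWithinAt
  · simp only [hyperplaneIntegrand, sub_zero]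

theorem differentiableAt_circleIntegral_hyperplaneIntegrand [FiniteDimensional ℂ E]
    (hΩ : IsOpen Ω) (hg : DifferentiableOn ℂ g Ω) {z₀ : E} (hz₀ : z₀ ∈ Ω) (hz₀c : L z₀ = c)
    {r : ℝ} (hr : 0 < r) (hrΩ : ∀ t ∈ sphere (0 : ℂ) r, z₀ + t • v ∈ Ω) :
    DifferentiableAt ℂ (fun z => ∮ ζ in C(0, r), hyperplaneIntegrand L c v g (z, ζ)) z₀ := by
  have hP₀ : Differentiable ℂ fun q : E × ℂ => lineParam L c v q.1 0 := by
    unfold lineParam; fun_prop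
  have hden : Differentiable ℂ fun q : E × ℂ => q.2 * (q.2 - (L q.1 - c)) := by fun_prop
  set U : Set (E × ℂ) := {q | lineParam L c v q.1 q.2 ∈ Ω} ∩ {q | lineParam L c v q.1 0 ∈ Ω} ∩
    {q | q.2 * (q.2 - (L q.1 - c)) ≠ 0}
  have hU : IsOpen U :=
    ((hΩ.preimage differentiable_lineParam.continuous).inter (hΩ.preimage hP₀.continuous)).inter
      (isOpen_ne_fun hden.continuous continuous_const)
  have hGU : DifferentiableOn ℂ (hyperplaneIntegrand L c v g) U :=
    (hden.differentiableOn.inv fun q hq => hq.2).smul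
      ((hg.comp differentiable_lineParam.differentiableOn fun q hq => hq.1.1).sub
        (hg.comp hP₀.differentiableOn fun q hq => hq.1.2))
  refine differentiableAt_circleIntegral_of_differentiableOn hU hGU ?_
  rintro ⟨z, ζ⟩ ⟨rfl, hζ⟩
  rw [abs_of_pos hr] at hζ
  have hζ0 : ζ ≠ 0 := ne_of_mem_sphere hζ hr.ne'
  refine ⟨⟨?_, ?_⟩, ?_⟩
  · simpa [lineParam_of_eq hz₀c] using hrΩ ζ hζ
  · simpa [lineParam_of_eq hz₀c] using hz₀
  · simpa [hz₀c] using hζ0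

theorem differentiableAt_hyperplaneQuotient_of_eq [FiniteDimensional ℂ E] (hv : L v = 1)
    (hΩ : IsOpen Ω) (hg : DifferentiableOn ℂ g Ω) (hvan : ∀ z ∈ Ω, L z = c → g z = 0)
    {z₀ : E} (hz₀ : z₀ ∈ Ω) (hz₀c : L z₀ = c) :
    DifferentiableAt ℂ (hyperplaneQuotient L c v g) z₀ := by
  obtain ⟨r, hr, hrΩ⟩ : ∃ r > 0, closedBall (0 : ℂ) r ⊆ {t | z₀ + t • v ∈ Ω} :=
    nhds_basis_closedBall.mem_iff.1 <| (by fun_prop : Continuous fun t : ℂ => z₀ + t • v)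
      |>.continuousAt.preimage_mem_nhds (by simpa using hΩ.mem_nhds hz₀)
  have hsphere : ∀ t ∈ sphere (0 : ℂ) (r / 2), z₀ + t • v ∈ Ω := fun t ht =>
    hrΩ (sphere_subset_closedBall.trans (closedBall_subset_closedBall (half_le_self hr.le)) ht)
  exact (((differentiableAt_circleIntegral_hyperplaneIntegrand hΩ hg hz₀ hz₀c (half_pos hr)
    hsphere).const_smul (2 * Real.pi * Complex.I)⁻¹).congr_of_eventuallyEq
      (hyperplaneQuotient_eventuallyEq_circleIntegral hv hΩ hg hvan hz₀c hr fun t ht => hrΩ ht))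

end Hyperplane

theorem exists_differentiableOn_eq_mul_of_vanishing_on_hyperplane {E : Type*}
    [NormedAddCommGroup E] [NormedSpace ℂ E] [FiniteDimensional ℂ E] {L : E →L[ℂ] ℂ}
    (hL : L ≠ 0) (c : ℂ) {Ω : Set E} (hΩ : IsOpen Ω) {g : E → ℂ} (hg : DifferentiableOn ℂ g Ω)
    (hvan : ∀ z ∈ Ω, L z = c → g z = 0) :
    ∃ h : E → ℂ, DifferentiableOn ℂ h Ω ∧ ∀ z ∈ Ω, g z = (L z - c) * h z := by
  obtain ⟨w, hw⟩ : ∃ w, L w ≠ 0 := by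
    by_contra! h
    exact hL (ContinuousLinearMap.ext h)
  have hv : L ((L w)⁻¹ • w) = 1 := by simp [hw]
  refine ⟨hyperplaneQuotient L c ((L w)⁻¹ • w) g, fun z hz => ?_,
    fun z hz => eq_mul_hyperplaneQuotient hvan hz⟩
  refine DifferentiableAt.differentiableWithinAt ?_
  by_cases hzc : L z = c
  · exact differentiableAt_hyperplaneQuotient_of_eq hv hΩ hg hvan hz hzc
  · exact differentiableAt_hyperplaneQuotient_of_ne hΩ hg hz hzc

theorem stmt_13_general {n : ℕ} (Ω : Set (Fin n → ℂ)) (hΩo : IsOpen Ω)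
    (a : Fin n → ℂ) (ha : a ≠ 0) (c : ℂ)
    (g : (Fin n → ℂ) → ℂ) (hg : DifferentiableOn ℂ g Ω)
    (hvan : ∀ z ∈ Ω, (∑ i, a i * z i) - c = 0 → g z = 0) :
    ∃ h : (Fin n → ℂ) → ℂ, DifferentiableOn ℂ h Ω ∧
      ∀ z ∈ Ω, g z = ((∑ i, a i * z i) - c) * h z := by
  set L : (Fin n → ℂ) →L[ℂ] ℂ := ∑ i, a i • ContinuousLinearMap.proj i
  have hLapply : ∀ z, L z = ∑ i, a i * z i := fun z => by simp [L]
  have hL : L ≠ 0 := by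
    obtain ⟨i, hi⟩ := Function.ne_iff.1 ha
    refine fun h0 => hi ?_
    simpa [hLapply, Pi.single_apply] using congrArg (· (Pi.single i 1)) h0
  simp only [← hLapply] at hvan ⊢
  exact exists_differentiableOn_eq_mul_of_vanishing_on_hyperplane hL c hΩo hg
    fun z hz hzc => hvan z hz (sub_eq_zero.2 hzc)

/-- A holomorphic function on a convex open subset of `ℂⁿ` vanishing on the trace
of an affine hyperplane `ℓ⁻¹(0)`, `ℓ(z) = ⟨a,z⟩ − c` with `a ≠ 0`, is divisible by
`ℓ` within the holomorphic functions on that set. -/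
theorem stmt_13 {n : ℕ} (Ω : Set (Fin n → ℂ)) (hΩo : IsOpen Ω) (hΩc : Convex ℝ Ω)
    (a : Fin n → ℂ) (ha : a ≠ 0) (c : ℂ)
    (g : (Fin n → ℂ) → ℂ) (hg : DifferentiableOn ℂ g Ω)
    (hvan : ∀ z ∈ Ω, (∑ i, a i * z i) - c = 0 → g z = 0) :
    ∃ h : (Fin n → ℂ) → ℂ, DifferentiableOn ℂ h Ω ∧
      ∀ z ∈ Ω, g z = ((∑ i, a i * z i) - c) * h z :=
  stmt_13_general Ω hΩo a ha c g hg hvan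
end
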